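/- (Cauchy–Schwarz inequality from reflection positivity.) In the setting of the reflection positivity of the torus Gibbs measure — L₁, L₂ positive integers, J > 0, h > 0, N ≥ 2 even, β ≥ 0, i ∈ {1,2}, n an integer, c = 2nL_i + L_i − 1, ϑ the reflection of 𝕋_N replacing t_i by (c − t_i) mod NL_i, and 𝕋ˡ = {t ∈ 𝕋_N : (2t_i − c) mod 2NL_i ≤ NL_i} — for all functions f, g : {−1,+1}^{𝕋_N} → ℝ depending only on the restriction of the configuration to 𝕋ˡ: [Σ_σ f(σ)·g(σ∘ϑ)·e^{−βH_N(σ)}]² ≤ [Σ_σ f(σ)·f(σ∘ϑ)·e^{−βH_N(σ)}]·[Σ_σ g(σ)·g(σ∘ϑ)·e^{−βH_N(σ)}]. -/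

import Mathlib

/-- The ±1 spin value of a Boolean spin configuration on the torus `(ℤ/aℤ) × (ℤ/bℤ)`. -/
noncomputable def spin {a b : ℕ} (σ : ZMod a × ZMod b → Bool) (t : ZMod a × ZMod b) : ℝ :=
  if σ t then 1 else -1

/-- Torus Hamiltonian with coupling `J` and external field `hf`:
`H(σ) = −J Σ_t [σ(t)σ(t+e₁) + σ(t)σ(t+e₂)] − Σ_t hf(t)σ(t)`. -/
noncomputable def ham {a b : ℕ} [NeZero a] [NeZero b] (J : ℝ)
    (hf : ZMod a × ZMod b → ℝ) (σ : ZMod a × ZMod b → Bool) : ℝ :=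
  -J * ∑ t, (spin σ t * spin σ (t + (1, 0)) + spin σ t * spin σ (t + (0, 1)))
    - ∑ t, hf t * spin σ t

/-- Cell-board external field on the torus, via canonical representatives:
`+h` if `⌊t₁/L₁⌋ + ⌊t₂/L₂⌋` is even, `−h` otherwise. -/
noncomputable def cellField {a b : ℕ} (L1 L2 : ℕ) (h : ℝ) (t : ZMod a × ZMod b) : ℝ :=
  if Even (t.1.val / L1 + t.2.val / L2) then h else -h

/-- Partition function `Z(β) = Σ_σ e^{−βH(σ)}`. -/
noncomputable def Zfun {a b : ℕ} [NeZero a] [NeZero b] (β J : ℝ)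
    (hf : ZMod a × ZMod b → ℝ) : ℝ :=
  ∑ σ : ZMod a × ZMod b → Bool, Real.exp (-β * ham J hf σ)

/-- Gibbs probability of a (finite) set of configurations. -/
noncomputable def gibbs {a b : ℕ} [NeZero a] [NeZero b] (β J : ℝ)
    (hf : ZMod a × ZMod b → ℝ) (E : Finset (ZMod a × ZMod b → Bool)) : ℝ :=
  (∑ σ ∈ E, Real.exp (-β * ham J hf σ)) / Zfun β J hf

/-- The reflection `ϑ` of the torus `𝕋_N = (ℤ/NL₁ℤ) × (ℤ/NL₂ℤ)` with respect to the
line `t_i = n·L_i + (L_i−1)/2` (`i ∈ {1,2}`, `n ∈ ℤ`): the `i`-th coordinate `t_i` is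
replaced by `(2nL_i + L_i − 1) − t_i` (mod `N·L_i`) and the other one is unchanged. -/
def reflMap (L1 L2 N : ℕ) (i : Fin 2) (n : ℤ) :
    ZMod (N * L1) × ZMod (N * L2) → ZMod (N * L1) × ZMod (N * L2) :=
  fun t =>
    if i = 0 then (((2 * n * L1 + L1 - 1 : ℤ) : ZMod (N * L1)) - t.1, t.2)
    else (t.1, ((2 * n * L2 + L2 - 1 : ℤ) : ZMod (N * L2)) - t.2)

/-- The left half `𝕋ˡ = {t ∈ 𝕋_N : (2t_i − c) mod 2NL_i ≤ NL_i}`, `c = 2nL_i + L_i − 1`. -/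
def leftHalf (L1 L2 N : ℕ) (i : Fin 2) (n : ℤ) : Set (ZMod (N * L1) × ZMod (N * L2)) :=
  {t | if i = 0
    then (2 * (t.1.val : ℤ) - (2 * n * L1 + L1 - 1)) % (2 * ((N : ℤ) * L1)) ≤ (N : ℤ) * L1
    else (2 * (t.2.val : ℤ) - (2 * n * L2 + L2 - 1)) % (2 * ((N : ℤ) * L2)) ≤ (N : ℤ) * L2}

/-
Away from the mirror, the reflection `ϑ` exchanges the left half `𝕋ˡ` with its complement, so the
energy splits as `−βH(σ) = Q(σ) + Q(σ∘ϑ) + βJ Σ_b s_b(σ) s_b(σ∘ϑ)`: here `Q` is the energy of `𝕋ˡ`,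
with the sites and bonds that `𝕋ˡ` shares with its mirror image counted with weight `1/2`, `b` runs
over the bonds cut by the mirror, and `s_b` is the spin at the end of `b` in `𝕋ˡ`. As
`e^{κx} = sinh κ · x + cosh κ` for `x = ±1`, this gives `e^{−βH(σ)} = Σ_S w_S A_S(σ) A_S(σ∘ϑ)`
with `w_S ≥ 0` and each `A_S` depending only on `𝕋ˡ`. For `u`, `v` depending only on `𝕋ˡ`,
splitting `σ` into its values on the mirror and on the two open halves gives
`Σ_σ u(σ) v(σ∘ϑ) = Σ_c U_c V_c`, where `U_c` sums `u` over the left-half configurations extending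
the mirror configuration `c`. So all three sums are of the form `Σ_p w_p X_p Y_p` with `w_p ≥ 0`,
and the inequality is Cauchy–Schwarz. A reflection in the second coordinate reduces to one in the
first by swapping the coordinates.
-/

open Finset

lemma Int.emod_eq_of_dvd_sub {a r m : ℤ} (h0 : 0 ≤ r) (h1 : r < m) (h : m ∣ a - r) :
    a % m = r := by
  rw [← Int.emod_eq_of_lt h0 h1]
  exact (Int.modEq_iff_dvd.2 h).symm

lemma Int.eq_or_eq_two_mul_of_dvd {m z : ℤ} (h0 : 0 < z) (h1 : z ≤ 2 * m) (h : m ∣ z) :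
    z = m ∨ z = 2 * m := by
  obtain ⟨k, rfl⟩ := h
  have hk0 : 0 < k := by nlinarith
  have hk2 : k ≤ 2 := by nlinarith
  interval_cases k <;> omega

lemma ZMod.intCast_val {M : ℕ} [NeZero M] (x : ZMod M) : ((x.val : ℤ) : ZMod M) = x := by
  rw [Int.cast_natCast, ZMod.natCast_zmod_val]

lemma DependsOn.mul {ι : Type*} {α : ι → Type*} {β : Type*} [Mul β] {f g : (Π i, α i) → β}
    {s : Set ι} (hf : DependsOn f s) (hg : DependsOn g s) : DependsOn (fun x => f x * g x) s :=
  fun _ _ h => congrArg₂ (· * ·) (hf h) (hg h)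

lemma Real.exp_mul_eq_sinh_mul_add_cosh {κ x : ℝ} (hx : x ^ 2 = 1) :
    Real.exp (κ * x) = Real.sinh κ * x + Real.cosh κ := by
  rcases sq_eq_one_iff.1 hx with rfl | rfl
  · rw [mul_one, mul_one, Real.sinh_add_cosh]
  · rw [mul_neg_one, mul_neg_one, ← Real.cosh_sub_sinh]
    ring

section ReflectionPositivity

variable {T : Type*}

structure IsReflectionHalf (ϑ : T → T) (L : Set T) : Prop where
  involutive : Function.Involutive ϑ
  mem_or_mem : ∀ t, t ∈ L ∨ ϑ t ∈ L
  eq_of_mem_of_mem : ∀ t ∈ L, ϑ t ∈ L → ϑ t = t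

def reflForm [Fintype T] [DecidableEq T] (ϑ : T → T) (E u v : (T → Bool) → ℝ) : ℝ :=
  ∑ σ, u σ * v (σ ∘ ϑ) * E σ

variable {ϑ : T → T} {L : Set T}

lemma IsReflectionHalf.mem_of_eq (hL : IsReflectionHalf ϑ L) {t : T} (ht : ϑ t = t) : t ∈ L :=
  (hL.mem_or_mem t).elim id (ht ▸ ·)

variable [DecidablePred (· ∈ L)]

namespace IsReflectionHalf

lemma piecewise_restrict (hL : IsReflectionHalf ϑ L) (σ : T → Bool) :
    L.piecewise (L.piecewise σ fun _ => false) ((L.piecewise (σ ∘ ϑ) fun _ => false) ∘ ϑ) = σ := by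
  funext t
  by_cases ht : t ∈ L
  · simp [ht]
  · simp [ht, (hL.mem_or_mem t).resolve_left ht, hL.involutive t]

lemma restrict_piecewise_comp (hL : IsReflectionHalf ϑ L) {a b : T → Bool}
    (hb : ∀ t ∉ L, b t = false) (hab : ∀ t, ϑ t = t → a t = b t) :
    (L.piecewise (L.piecewise a (b ∘ ϑ) ∘ ϑ) fun _ => false) = b := by
  funext t
  by_cases ht : t ∈ L
  · by_cases hϑt : ϑ t ∈ L
    · have hfix := hL.eq_of_mem_of_mem t ht hϑt
      simp [ht, hfix, hab t hfix]
    · simp [ht, hϑt, hL.involutive t]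
  · simp [ht, hb t ht]

end IsReflectionHalf

lemma Set.piecewise_piecewise_false {a : T → Bool} (ha : ∀ t ∉ L, a t = false) (x : T → Bool) :
    (L.piecewise (L.piecewise a x) fun _ => false) = a := by
  funext t
  by_cases ht : t ∈ L
  · simp [ht]
  · simp [ht, ha t ht]

variable [Fintype T] [DecidableEq T]

def halfFiber (ϑ : T → T) (L : Set T) [DecidablePred (· ∈ L)] (c : {t // ϑ t = t} → Bool) :
    Finset (T → Bool) :=
  {a | (∀ t ∉ L, a t = false) ∧ ∀ t : {t // ϑ t = t}, a t = c t}

theorem sum_mul_comp_eq_sum_halfFiber (hL : IsReflectionHalf ϑ L) {u v : (T → Bool) → ℝ}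
    (hu : DependsOn u L) (hv : DependsOn v L) :
    ∑ σ, u σ * v (σ ∘ ϑ)
      = ∑ c, (∑ a ∈ halfFiber ϑ L c, u a) * ∑ b ∈ halfFiber ϑ L c, v b := by
  simp only [sum_mul_sum, ← sum_product', sum_sigma']
  refine sum_nbij' (fun σ => ⟨fun t => σ t, L.piecewise σ fun _ => false,
      L.piecewise (σ ∘ ϑ) fun _ => false⟩)
    (fun p => L.piecewise p.2.1 (p.2.2 ∘ ϑ)) (fun σ _ => ?_) (by simp)
    (fun σ _ => hL.piecewise_restrict σ) (fun ⟨c, a, b⟩ hp => ?_) fun σ _ => ?_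
  · simp only [mem_sigma, mem_univ, true_and, mem_product, halfFiber, mem_filter]
    refine ⟨⟨fun t ht => Set.piecewise_eq_of_notMem _ _ _ ht, fun t => ?_⟩,
      fun t ht => Set.piecewise_eq_of_notMem _ _ _ ht, fun t => ?_⟩
    · exact Set.piecewise_eq_of_mem _ _ _ (hL.mem_of_eq t.2)
    · rw [Set.piecewise_eq_of_mem _ _ _ (hL.mem_of_eq t.2), Function.comp_apply, t.2]
  · simp only [mem_sigma, mem_univ, true_and, mem_product, halfFiber, mem_filter] at hp
    obtain ⟨⟨ha, hac⟩, hb, hbc⟩ := hp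
    have hab : ∀ t, ϑ t = t → a t = b t := fun t ht => (hac ⟨t, ht⟩).trans (hbc ⟨t, ht⟩).symm
    refine Sigma.ext (funext fun t => ?_) (heq_of_eq (Prod.ext
      (Set.piecewise_piecewise_false ha _) (hL.restrict_piecewise_comp hb hab)))
    dsimp only
    rw [Set.piecewise_eq_of_mem _ _ _ (hL.mem_of_eq t.2), hac]
  · rw [hu fun t ht => (Set.piecewise_eq_of_mem _ _ _ ht).symm,
      hv fun t ht => (Set.piecewise_eq_of_mem _ _ _ ht).symm]

theorem reflForm_sq_le_of_eq_sum (hL : IsReflectionHalf ϑ L) {ι : Type*} (K : Finset ι)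
    {w : ι → ℝ} (hw : ∀ k ∈ K, 0 ≤ w k) {A : ι → (T → Bool) → ℝ} (hA : ∀ k, DependsOn (A k) L)
    {E : (T → Bool) → ℝ} (hE : ∀ σ, E σ = ∑ k ∈ K, w k * (A k σ * A k (σ ∘ ϑ)))
    {f g : (T → Bool) → ℝ} (hf : DependsOn f L) (hg : DependsOn g L) :
    reflForm ϑ E f g ^ 2 ≤ reflForm ϑ E f f * reflForm ϑ E g g := by
  have key : ∀ {u v : (T → Bool) → ℝ}, DependsOn u L → DependsOn v L →
      reflForm ϑ E u v = ∑ p ∈ K ×ˢ univ, w p.1 * ((∑ a ∈ halfFiber ϑ L p.2, u a * A p.1 a) *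
        ∑ b ∈ halfFiber ϑ L p.2, v b * A p.1 b) := by
    intro u v hu hv
    simp_rw [sum_product, ← mul_sum, ← sum_mul_comp_eq_sum_halfFiber hL (hu.mul (hA _))
      (hv.mul (hA _)), reflForm, hE, mul_sum]
    rw [sum_comm]
    exact sum_congr rfl fun k _ => sum_congr rfl fun σ _ => by ring
  rw [key hf hg, key hf hf, key hg hg]
  refine sum_sq_le_sum_mul_sum_of_sq_le_mul _ (fun p hp => ?_) (fun p hp => ?_) fun p _ => ?_
  · exact mul_nonneg (hw _ (mem_product.1 hp).1) (mul_self_nonneg _)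
  · exact mul_nonneg (hw _ (mem_product.1 hp).1) (mul_self_nonneg _)
  · exact le_of_eq (by ring)

theorem reflForm_exp_sq_le (hL : IsReflectionHalf ϑ L) {Q : (T → Bool) → ℝ} (hQ : DependsOn Q L)
    {ι : Type*} [DecidableEq ι] (X : Finset ι) {κ : ι → ℝ} (hκ : ∀ j ∈ X, 0 ≤ κ j)
    {C : ι → (T → Bool) → ℝ} (hC : ∀ j, DependsOn (C j) L) (hC2 : ∀ j σ, C j σ ^ 2 = 1)
    {E : (T → Bool) → ℝ}
    (hE : ∀ σ, E σ = Real.exp (Q σ + Q (σ ∘ ϑ) + ∑ j ∈ X, κ j * (C j σ * C j (σ ∘ ϑ))))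
    {f g : (T → Bool) → ℝ} (hf : DependsOn f L) (hg : DependsOn g L) :
    reflForm ϑ E f g ^ 2 ≤ reflForm ϑ E f f * reflForm ϑ E g g := by
  refine reflForm_sq_le_of_eq_sum hL X.powerset (w := fun S => (∏ j ∈ S, Real.sinh (κ j)) *
      ∏ j ∈ X \ S, Real.cosh (κ j)) (A := fun S σ => Real.exp (Q σ) * ∏ j ∈ S, C j σ)
    (fun S hS => ?_) (fun S σ σ' h => ?_) (fun σ => ?_) hf hg
  · exact mul_nonneg (prod_nonneg fun j hj => Real.sinh_nonneg_iff.2 (hκ j (mem_powerset.1 hS hj)))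
      (prod_nonneg fun j _ => (Real.cosh_pos _).le)
  · simp only [hQ h, hC _ h]
  · have hx : ∀ j, (C j σ * C j (σ ∘ ϑ)) ^ 2 = 1 := fun j => by rw [mul_pow, hC2, hC2, one_mul]
    rw [hE, Real.exp_add, Real.exp_add, Real.exp_sum,
      prod_congr rfl fun j _ => Real.exp_mul_eq_sinh_mul_add_cosh (hx j), prod_add, mul_sum]
    refine sum_congr rfl fun S _ => ?_
    rw [prod_mul_distrib, prod_mul_distrib]
    ring

end ReflectionPositivity

lemma reflForm_swap {α β : Type*} [Fintype α] [Fintype β] [DecidableEq α] [DecidableEq β]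
    (ϑ : β × α → β × α)
    (E u v : (α × β → Bool) → ℝ) :
    reflForm (Prod.swap ∘ ϑ ∘ Prod.swap) E u v
      = reflForm ϑ (fun τ => E (τ ∘ Prod.swap)) (fun τ => u (τ ∘ Prod.swap))
          (fun τ => v (τ ∘ Prod.swap)) := by
  refine (Fintype.sum_equiv ((Equiv.prodComm β α).arrowCongr (Equiv.refl Bool)) _ _
    fun τ => ?_).symm
  have hswap : (τ ∘ Prod.swap) ∘ Prod.swap ∘ ϑ ∘ Prod.swap = (τ ∘ ϑ) ∘ Prod.swap := by
    funext t
    simp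
  show _ = u (τ ∘ Prod.swap) * v ((τ ∘ Prod.swap) ∘ Prod.swap ∘ ϑ ∘ Prod.swap) * E (τ ∘ Prod.swap)
  rw [hswap]

section HalfWeight

variable {T : Type*} {ψ : T → T} {K : Set T} [DecidablePred (· ∈ K)]

/-- Sites (or bonds) of `K` whose image under `ψ` also lies in `K` are shared by `K` and its
image, hence the weight `1/2`. -/
noncomputable def halfWeight (ψ : T → T) (K : Set T) [DecidablePred (· ∈ K)] (t : T) : ℝ :=
  if t ∈ K then if ψ t ∈ K then 1 / 2 else 1 else 0

lemma halfWeight_mul_congr {x y : ℝ} (t : T) (h : t ∈ K → x = y) :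
    halfWeight ψ K t * x = halfWeight ψ K t * y := by
  by_cases ht : t ∈ K
  · rw [h ht]
  · simp [halfWeight, ht]

theorem sum_eq_halfWeight_add [Fintype T] (hψ : Function.Involutive ψ) {G G' : T → ℝ}
    (hG : ∀ t, G (ψ t) = G' t) :
    ∑ t, G t = ∑ t, halfWeight ψ K t * G t + ∑ t, halfWeight ψ K t * G' t
      + ∑ t with t ∉ K ∧ ψ t ∉ K, G t := by
  have hreindex : ∑ t, halfWeight ψ K t * G' t = ∑ t, halfWeight ψ K (ψ t) * G t := by
    rw [← Equiv.sum_comp (hψ.toPerm ψ)]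
    simp [← hG, hψ _]
  rw [hreindex, sum_filter, ← sum_add_distrib, ← sum_add_distrib]
  refine sum_congr rfl fun t _ => ?_
  simp only [halfWeight, hψ t]
  split_ifs <;> first | (exfalso; tauto) | ring

end HalfWeight

section Mirror

variable {M : ℕ} {c : ℤ}

/-- `2x − c` modulo `2M`: twice the distance from `x` to the mirror point `c/2` of `ℤ/Mℤ`,
measured in the positive direction. -/
def mirrorOffset (M : ℕ) (c : ℤ) (x : ZMod M) : ℤ := (2 * (x.val : ℤ) - c) % (2 * M)

def mirrorHalf (M : ℕ) (c : ℤ) : Set (ZMod M) := {x | mirrorOffset M c x ≤ M}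

instance : DecidablePred (· ∈ mirrorHalf M c) := fun x =>
  inferInstanceAs (Decidable (mirrorOffset M c x ≤ M))

lemma exists_mirrorOffset_eq (x : ZMod M) :
    ∃ q : ℤ, 2 * (x.val : ℤ) - c = mirrorOffset M c x + 2 * M * q :=
  ⟨_, (Int.emod_add_mul_ediv _ _).symm⟩

variable [NeZero M]

lemma mirrorOffset_nonneg (x : ZMod M) : 0 ≤ mirrorOffset M c x :=
  Int.emod_nonneg _ (by have := NeZero.pos M; omega)

lemma mirrorOffset_lt (x : ZMod M) : mirrorOffset M c x < 2 * M :=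
  Int.emod_lt_of_pos _ (by have := NeZero.pos M; omega)

lemma mirrorOffset_intCast (z : ℤ) : mirrorOffset M c z = (2 * z - c) % (2 * M) := by
  rw [mirrorOffset, ZMod.val_intCast, Int.emod_def z,
    show 2 * (z - M * (z / M)) - c = 2 * z - c + 2 * M * -(z / M) by ring,
    Int.add_mul_emod_self_left]

lemma mirrorOffset_sub (x : ZMod M) :
    mirrorOffset M c (c - x)
      = if mirrorOffset M c x = 0 then 0 else 2 * M - mirrorOffset M c x := by
  obtain ⟨q, hq⟩ := exists_mirrorOffset_eq (c := c) x
  have := mirrorOffset_lt (c := c) x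
  rw [← ZMod.intCast_val x, ← Int.cast_sub, mirrorOffset_intCast, ZMod.intCast_val]
  split_ifs with hy
  · exact Int.emod_eq_of_dvd_sub le_rfl (by omega) ⟨-q, by linarith⟩
  · have := mirrorOffset_nonneg (c := c) x
    exact Int.emod_eq_of_dvd_sub (by omega) (by omega) ⟨-q - 1, by linarith⟩

lemma mirrorOffset_add_one (x : ZMod M) :
    mirrorOffset M c (x + 1) = if mirrorOffset M c x + 2 < 2 * M then mirrorOffset M c x + 2
      else mirrorOffset M c x + 2 - 2 * M := by
  obtain ⟨q, hq⟩ := exists_mirrorOffset_eq (c := c) x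
  have h0 := mirrorOffset_nonneg (c := c) x
  have h1 := mirrorOffset_lt (c := c) x
  rw [← ZMod.intCast_val x, ← Int.cast_one, ← Int.cast_add, mirrorOffset_intCast,
    ZMod.intCast_val]
  split_ifs with hy
  · exact Int.emod_eq_of_dvd_sub (by omega) hy ⟨q, by linarith⟩
  · exact Int.emod_eq_of_dvd_sub (by omega) (by omega) ⟨q + 1, by linarith⟩

lemma sub_eq_add_iff_dvd_mirrorOffset (x : ZMod M) (k : ℤ) :
    (c : ZMod M) - x = x + k ↔ (M : ℤ) ∣ mirrorOffset M c x + k := by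
  obtain ⟨q, hq⟩ := exists_mirrorOffset_eq (c := c) x
  rw [← ZMod.intCast_val x, ← Int.cast_sub, ← Int.cast_add, ZMod.intCast_eq_intCast_iff_dvd_sub,
    ZMod.intCast_val, show (x.val : ℤ) + k - (c - x.val) = mirrorOffset M c x + k + M * (2 * q) by
      linarith, dvd_add_left (dvd_mul_right _ _)]

lemma mem_mirrorHalf_or_sub_mem (x : ZMod M) :
    x ∈ mirrorHalf M c ∨ (c : ZMod M) - x ∈ mirrorHalf M c := by
  have := mirrorOffset_lt (c := c) x
  simp only [mirrorHalf, Set.mem_ofPred_eq, mirrorOffset_sub]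
  split_ifs <;> omega

lemma sub_eq_self_of_mem_of_sub_mem {x : ZMod M} (hx : x ∈ mirrorHalf M c)
    (hx' : (c : ZMod M) - x ∈ mirrorHalf M c) : (c : ZMod M) - x = x := by
  have := mirrorOffset_nonneg (c := c) x
  simp only [mirrorHalf, Set.mem_ofPred_eq, mirrorOffset_sub] at hx hx'
  have hy : mirrorOffset M c x = 0 ∨ mirrorOffset M c x = M := by split_ifs at hx' <;> omega
  simpa using (sub_eq_add_iff_dvd_mirrorOffset (c := c) x 0).2
    (by rcases hy with hy | hy <;> simp [hy])

lemma sub_eq_add_one_iff (hM : 2 ≤ M) (x : ZMod M) :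
    (c : ZMod M) - x = x + 1 ↔ ¬(x ∈ mirrorHalf M c ∧ x + 1 ∈ mirrorHalf M c) ∧
      ¬((c : ZMod M) - (x + 1) ∈ mirrorHalf M c ∧ (c : ZMod M) - x ∈ mirrorHalf M c) := by
  have h0 := mirrorOffset_nonneg (c := c) x
  have h1 := mirrorOffset_lt (c := c) x
  have hdvd : (M : ℤ) ∣ mirrorOffset M c x + 1 ↔
      mirrorOffset M c x + 1 = M ∨ mirrorOffset M c x + 1 = 2 * M := by
    refine ⟨Int.eq_or_eq_two_mul_of_dvd (by omega) (by omega), ?_⟩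
    rintro (h | h) <;> simp [h]
  have hcross := sub_eq_add_iff_dvd_mirrorOffset (c := c) x 1
  rw [Int.cast_one] at hcross
  rw [hcross, hdvd]
  simp only [mirrorHalf, Set.mem_ofPred_eq, mirrorOffset_sub, mirrorOffset_add_one]
  split_ifs <;> omega

end Mirror

section Torus

variable {a b : ℕ} {c : ℤ}

def torusRefl (c : ℤ) (t : ZMod a × ZMod b) : ZMod a × ZMod b := ((c : ZMod a) - t.1, t.2)

def torusHalf (a b : ℕ) (c : ℤ) : Set (ZMod a × ZMod b) := Prod.fst ⁻¹' mirrorHalf a c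

def bondRefl (c : ℤ) (t : ZMod a × ZMod b) : ZMod a × ZMod b := torusRefl c (t + (1, 0))

def bondHalf (a b : ℕ) (c : ℤ) : Set (ZMod a × ZMod b) :=
  {t | t ∈ torusHalf a b c ∧ t + (1, 0) ∈ torusHalf a b c}

instance : DecidablePred (· ∈ torusHalf a b c) := fun t =>
  inferInstanceAs (Decidable (t.1 ∈ mirrorHalf a c))

instance : DecidablePred (· ∈ bondHalf a b c) := fun t =>
  inferInstanceAs (Decidable (t ∈ torusHalf a b c ∧ t + (1, 0) ∈ torusHalf a b c))

lemma torusRefl_involutive : Function.Involutive (torusRefl (a := a) (b := b) c) := fun _ => by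
  simp [torusRefl]

lemma torusRefl_add_right (t : ZMod a × ZMod b) :
    torusRefl c (t + (0, 1)) = torusRefl c t + (0, 1) := by
  simp [torusRefl]

lemma add_right_mem_torusHalf {t : ZMod a × ZMod b} (ht : t ∈ torusHalf a b c) :
    t + (0, 1) ∈ torusHalf a b c := by
  simpa [torusHalf] using ht

lemma bondRefl_add_one (t : ZMod a × ZMod b) : bondRefl c t + (1, 0) = torusRefl c t :=
  Prod.ext (by simp [bondRefl, torusRefl, sub_add_eq_sub_sub]) (by simp [bondRefl, torusRefl])

lemma bondRefl_involutive : Function.Involutive (bondRefl (a := a) (b := b) c) := fun t => by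
  rw [bondRefl, bondRefl_add_one, torusRefl_involutive]

lemma spin_comp {a' b' : ℕ} (σ : ZMod a × ZMod b → Bool) (f : ZMod a' × ZMod b' → ZMod a × ZMod b)
    (t : ZMod a' × ZMod b') : spin (σ ∘ f) t = spin σ (f t) := rfl

lemma spin_congr {σ σ' : ZMod a × ZMod b → Bool} {t : ZMod a × ZMod b} (h : σ t = σ' t) :
    spin σ t = spin σ' t := by
  rw [spin, spin, h]

/-- For a bond `{t, t + (1, 0)}` cut by the mirror, i.e. `torusRefl c t = t + (1, 0)`, the spin
at its end in the left half. -/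
noncomputable def crossingSpin (c : ℤ) (t : ZMod a × ZMod b) (σ : ZMod a × ZMod b → Bool) : ℝ :=
  spin σ (if t ∈ torusHalf a b c then t else torusRefl c t)

lemma crossingSpin_sq (t : ZMod a × ZMod b) (σ : ZMod a × ZMod b → Bool) :
    crossingSpin c t σ ^ 2 = 1 := by
  unfold crossingSpin spin
  split_ifs <;> norm_num

lemma crossingSpin_mul_crossingSpin {t : ZMod a × ZMod b} (ht : torusRefl c t = t + (1, 0))
    (σ : ZMod a × ZMod b → Bool) :
    crossingSpin c t σ * crossingSpin c t (σ ∘ torusRefl c) = spin σ t * spin σ (t + (1, 0)) := by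
  unfold crossingSpin
  split_ifs
  · rw [spin_comp, ht]
  · rw [spin_comp, torusRefl_involutive, ht, mul_comm]

variable [NeZero a]

lemma isReflectionHalf_torusHalf : IsReflectionHalf (torusRefl c) (torusHalf a b c) where
  involutive := torusRefl_involutive
  mem_or_mem t := mem_mirrorHalf_or_sub_mem t.1
  eq_of_mem_of_mem _ ht ht' := Prod.ext (sub_eq_self_of_mem_of_sub_mem ht ht') rfl

lemma notMem_bondHalf_and_iff (ha : 2 ≤ a) (t : ZMod a × ZMod b) :
    t ∉ bondHalf a b c ∧ bondRefl c t ∉ bondHalf a b c ↔ torusRefl c t = t + (1, 0) := by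
  have h : torusRefl c t = t + (1, 0) ↔ (c : ZMod a) - t.1 = t.1 + 1 := by
    simp [torusRefl, Prod.ext_iff]
  rw [h, sub_eq_add_one_iff ha]
  simp [bondHalf, torusHalf, bondRefl, torusRefl, sub_add_eq_sub_sub]

lemma dependsOn_crossingSpin (t : ZMod a × ZMod b) :
    DependsOn (crossingSpin c t) (torusHalf a b c) := fun σ σ' h => by
  unfold crossingSpin
  split_ifs with ht
  · exact spin_congr (h t ht)
  · exact spin_congr (h _ ((isReflectionHalf_torusHalf.mem_or_mem t).resolve_left ht))

variable [NeZero b]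

noncomputable def boltzmannWeight (β J : ℝ) (hf : ZMod a × ZMod b → ℝ)
    (σ : ZMod a × ZMod b → Bool) : ℝ :=
  Real.exp (-β * ham J hf σ)

noncomputable def halfEnergy (c : ℤ) (J β : ℝ) (hf : ZMod a × ZMod b → ℝ)
    (σ : ZMod a × ZMod b → Bool) : ℝ :=
  β * J * ∑ t, halfWeight (bondRefl c) (bondHalf a b c) t * (spin σ t * spin σ (t + (1, 0)))
    + β * J * ∑ t, halfWeight (torusRefl c) (torusHalf a b c) t * (spin σ t * spin σ (t + (0, 1)))
    + β * ∑ t, halfWeight (torusRefl c) (torusHalf a b c) t * (hf t * spin σ t)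

def crossingBonds (a b : ℕ) [NeZero a] [NeZero b] (c : ℤ) : Finset (ZMod a × ZMod b) :=
  {t | torusRefl c t = t + (1, 0)}

lemma dependsOn_halfEnergy (J β : ℝ) (hf : ZMod a × ZMod b → ℝ) :
    DependsOn (halfEnergy c J β hf) (torusHalf a b c) := fun σ σ' h => by
  unfold halfEnergy
  congr 3
  · exact sum_congr rfl fun t _ => halfWeight_mul_congr t fun ht => by
      rw [spin_congr (h t ht.1), spin_congr (h _ ht.2)]
  · exact sum_congr rfl fun t _ => halfWeight_mul_congr t fun ht => by
      rw [spin_congr (h t ht), spin_congr (h _ (add_right_mem_torusHalf ht))]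
  · exact funext fun t => halfWeight_mul_congr t fun ht => by rw [spin_congr (h t ht)]

theorem neg_mul_ham_eq (ha : 2 ≤ a) (J β : ℝ) {hf : ZMod a × ZMod b → ℝ}
    (hinv : ∀ t, hf (torusRefl c t) = hf t) (σ : ZMod a × ZMod b → Bool) :
    -β * ham J hf σ = halfEnergy c J β hf σ + halfEnergy c J β hf (σ ∘ torusRefl c)
      + ∑ t ∈ crossingBonds a b c,
          β * J * (crossingSpin c t σ * crossingSpin c t (σ ∘ torusRefl c)) := by
  have hbond := sum_eq_halfWeight_add (K := bondHalf a b c) (bondRefl_involutive (c := c))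
    (G := fun t => spin σ t * spin σ (t + (1, 0)))
    (G' := fun t => spin (σ ∘ torusRefl c) t * spin (σ ∘ torusRefl c) (t + (1, 0)))
    fun t => by rw [bondRefl_add_one, mul_comm]; rfl
  have hperp := sum_eq_halfWeight_add (K := torusHalf a b c) (torusRefl_involutive (c := c))
    (G := fun t => spin σ t * spin σ (t + (0, 1)))
    (G' := fun t => spin (σ ∘ torusRefl c) t * spin (σ ∘ torusRefl c) (t + (0, 1)))
    fun t => by rw [spin_comp, spin_comp, torusRefl_add_right]
  have hfield := sum_eq_halfWeight_add (K := torusHalf a b c) (torusRefl_involutive (c := c))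
    (G := fun t => hf t * spin σ t) (G' := fun t => hf t * spin (σ ∘ torusRefl c) t)
    fun t => by rw [hinv, spin_comp]
  have hcross : ∑ t with t ∉ bondHalf a b c ∧ bondRefl c t ∉ bondHalf a b c,
      spin σ t * spin σ (t + (1, 0))
      = ∑ t ∈ crossingBonds a b c, crossingSpin c t σ * crossingSpin c t (σ ∘ torusRefl c) := by
    refine sum_congr (filter_congr fun t _ => notMem_bondHalf_and_iff ha t) fun t ht => ?_
    exact (crossingSpin_mul_crossingSpin (mem_filter.1 ht).2 σ).symm
  have hempty : ∀ G : ZMod a × ZMod b → ℝ,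
      ∑ t with t ∉ torusHalf a b c ∧ torusRefl c t ∉ torusHalf a b c, G t = 0 := fun G =>
    sum_eq_zero fun t ht => absurd (isReflectionHalf_torusHalf.mem_or_mem t) (by
      simpa only [mem_filter, not_or] using (mem_filter.1 ht).2)
  rw [ham, sum_add_distrib, hbond, hperp, hfield, hcross, hempty, hempty, halfEnergy, halfEnergy,
    ← mul_sum]
  ring

theorem reflForm_torusRefl_sq_le (ha : 2 ≤ a) {J β : ℝ} (hβJ : 0 ≤ β * J)
    {hf : ZMod a × ZMod b → ℝ} (hinv : ∀ t, hf (torusRefl c t) = hf t)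
    {f g : (ZMod a × ZMod b → Bool) → ℝ} (hfL : DependsOn f (torusHalf a b c))
    (hgL : DependsOn g (torusHalf a b c)) :
    reflForm (torusRefl c) (boltzmannWeight β J hf) f g ^ 2
      ≤ reflForm (torusRefl c) (boltzmannWeight β J hf) f f
        * reflForm (torusRefl c) (boltzmannWeight β J hf) g g :=
  reflForm_exp_sq_le isReflectionHalf_torusHalf (dependsOn_halfEnergy J β hf)
    (crossingBonds a b c) (κ := fun _ => β * J) (fun _ _ => hβJ) dependsOn_crossingSpin
    crossingSpin_sq (fun σ => by rw [boltzmannWeight, neg_mul_ham_eq ha J β hinv σ]) hfL hgL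

end Torus

lemma boltzmannWeight_comp_swap {a b : ℕ} [NeZero a] [NeZero b] (β J : ℝ)
    (hf : ZMod a × ZMod b → ℝ) (τ : ZMod b × ZMod a → Bool) :
    boltzmannWeight β J hf (τ ∘ Prod.swap) = boltzmannWeight β J (hf ∘ Prod.swap) τ := by
  unfold boltzmannWeight ham
  conv_lhs => rw [← (Equiv.prodComm (ZMod b) (ZMod a)).sum_comp,
    ← (Equiv.prodComm (ZMod b) (ZMod a)).sum_comp]
  simp [spin_comp, add_comm]

lemma cellField_comp_swap {a b : ℕ} (L1 L2 : ℕ) (h : ℝ) :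
    cellField (a := a) (b := b) L1 L2 h ∘ Prod.swap = cellField L2 L1 h := by
  funext t
  simp [cellField, add_comm]

lemma reflMap_zero (L1 L2 N : ℕ) (n : ℤ) :
    reflMap L1 L2 N 0 n = torusRefl (2 * n * L1 + L1 - 1) := by
  funext t
  simp [reflMap, torusRefl]

lemma reflMap_one (L1 L2 N : ℕ) (n : ℤ) :
    reflMap L1 L2 N 1 n = Prod.swap ∘ reflMap L2 L1 N 0 n ∘ Prod.swap := by
  funext t
  simp [reflMap]

lemma leftHalf_zero (L1 L2 N : ℕ) (n : ℤ) :
    leftHalf L1 L2 N 0 n = torusHalf (N * L1) (N * L2) (2 * n * L1 + L1 - 1) := by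
  ext t
  simp [leftHalf, torusHalf, mirrorHalf, mirrorOffset]

lemma leftHalf_one (L1 L2 N : ℕ) (n : ℤ) :
    leftHalf L1 L2 N 1 n = Prod.swap ⁻¹' leftHalf L2 L1 N 0 n := by
  ext t
  simp [leftHalf]

lemma two_le_mul_of_even {N L : ℕ} (hN : Even N) (h : N * L ≠ 0) : 2 ≤ N * L := by
  obtain ⟨m, rfl⟩ := hN
  have hm : m ≠ 0 := fun hm => h (by simp [hm])
  calc 2 ≤ m + m := by omega
    _ ≤ (m + m) * L := Nat.le_mul_of_pos_right _ (Nat.pos_of_ne_zero (right_ne_zero_of_mul h))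

-- Reflection in the mirror `t = nL + (L - 1)/2`, which lies on a cell boundary, sends cell `q`
-- to cell `2n - q` modulo `N`, and `N` is even.
lemma even_val_sub_div_add_val_div {N L : ℕ} [NeZero (N * L)] (hN : Even N) (n : ℤ)
    (x : ZMod (N * L)) :
    Even ((((2 * n * L + L - 1 : ℤ) : ZMod (N * L)) - x).val / L + x.val / L) := by
  have hL : (0 : ℤ) < L := by
    exact_mod_cast Nat.pos_of_ne_zero (right_ne_zero_of_mul (NeZero.ne (N * L)))
  have hv := Int.mul_ediv_add_emod (x.val : ℤ) L
  have hr0 := Int.emod_nonneg (x.val : ℤ) hL.ne'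
  have hr1 := Int.emod_lt_of_pos (x.val : ℤ) hL
  rw [← ZMod.intCast_val x, ← Int.cast_sub, ← Int.even_coe_nat, Nat.cast_add, Int.natCast_div,
    Int.natCast_div, ZMod.val_intCast, ZMod.intCast_val, Nat.cast_mul]
  obtain ⟨k, hk⟩ : ∃ k, (2 * n * L + L - 1 - x.val) % ((N : ℤ) * L)
      = 2 * n * L + L - 1 - x.val - N * L * k := ⟨_, Int.emod_def _ _⟩
  have hdiv : (2 * n * L + L - 1 - x.val) % ((N : ℤ) * L) / L
      = 2 * n - (x.val : ℤ) / L - N * k := by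
    refine ((Int.ediv_emod_unique hL (r := L - 1 - (x.val : ℤ) % L)).2
      ⟨?_, by omega, by omega⟩).1
    linarith
  rw [hdiv]
  obtain ⟨m, rfl⟩ := hN
  exact ⟨n - m * k, by push_cast; ring⟩

lemma cellField_torusRefl {L1 L2 N : ℕ} [NeZero (N * L1)] (hN : Even N) (h : ℝ) (n : ℤ)
    (t : ZMod (N * L1) × ZMod (N * L2)) :
    cellField L1 L2 h (torusRefl (2 * n * L1 + L1 - 1) t) = cellField L1 L2 h t := by
  have hpar := Nat.even_add.1 (even_val_sub_div_add_val_div hN n t.1)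
  simp only [cellField, torusRefl, Nat.even_add, hpar]

theorem reflForm_reflMap_zero_sq_le {L1 L2 N : ℕ} [NeZero (N * L1)] [NeZero (N * L2)]
    (hN : Even N) {J h β : ℝ} (hβJ : 0 ≤ β * J) {n : ℤ}
    {f g : (ZMod (N * L1) × ZMod (N * L2) → Bool) → ℝ}
    (hf : DependsOn f (leftHalf L1 L2 N 0 n)) (hg : DependsOn g (leftHalf L1 L2 N 0 n)) :
    reflForm (reflMap L1 L2 N 0 n) (boltzmannWeight β J (cellField L1 L2 h)) f g ^ 2
      ≤ reflForm (reflMap L1 L2 N 0 n) (boltzmannWeight β J (cellField L1 L2 h)) f f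
        * reflForm (reflMap L1 L2 N 0 n) (boltzmannWeight β J (cellField L1 L2 h)) g g := by
  rw [leftHalf_zero] at hf hg
  rw [reflMap_zero]
  exact reflForm_torusRefl_sq_le (two_le_mul_of_even hN (NeZero.ne _)) hβJ
    (cellField_torusRefl hN h n) hf hg

theorem reflForm_reflMap_one_sq_le {L1 L2 N : ℕ} [NeZero (N * L1)] [NeZero (N * L2)]
    (hN : Even N) {J h β : ℝ} (hβJ : 0 ≤ β * J) {n : ℤ}
    {f g : (ZMod (N * L1) × ZMod (N * L2) → Bool) → ℝ}
    (hf : DependsOn f (leftHalf L1 L2 N 1 n)) (hg : DependsOn g (leftHalf L1 L2 N 1 n)) :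
    reflForm (reflMap L1 L2 N 1 n) (boltzmannWeight β J (cellField L1 L2 h)) f g ^ 2
      ≤ reflForm (reflMap L1 L2 N 1 n) (boltzmannWeight β J (cellField L1 L2 h)) f f
        * reflForm (reflMap L1 L2 N 1 n) (boltzmannWeight β J (cellField L1 L2 h)) g g := by
  rw [leftHalf_one] at hf hg
  simp only [reflMap_one, reflForm_swap, boltzmannWeight_comp_swap, cellField_comp_swap]
  exact reflForm_reflMap_zero_sq_le hN hβJ (fun τ τ' hτ => hf fun t ht => hτ _ ht)
    fun τ τ' hτ => hg fun t ht => hτ _ ht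

theorem cauchy_schwarz_reflection_general (L1 L2 N : ℕ)
    (hNeven : Even N) [NeZero (N * L1)] [NeZero (N * L2)]
    (J h β : ℝ) (hJ : 0 < J) (hβ : 0 ≤ β) (i : Fin 2) (n : ℤ)
    (f g : (ZMod (N * L1) × ZMod (N * L2) → Bool) → ℝ)
    (hf : ∀ σ σ', (∀ t ∈ leftHalf L1 L2 N i n, σ t = σ' t) → f σ = f σ')
    (hg : ∀ σ σ', (∀ t ∈ leftHalf L1 L2 N i n, σ t = σ' t) → g σ = g σ') :
    (∑ σ : ZMod (N * L1) × ZMod (N * L2) → Bool,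
        f σ * g (σ ∘ reflMap L1 L2 N i n) * Real.exp (-β * ham J (cellField L1 L2 h) σ)) ^ 2
      ≤ (∑ σ : ZMod (N * L1) × ZMod (N * L2) → Bool,
          f σ * f (σ ∘ reflMap L1 L2 N i n) * Real.exp (-β * ham J (cellField L1 L2 h) σ))
        * (∑ σ : ZMod (N * L1) × ZMod (N * L2) → Bool,
          g σ * g (σ ∘ reflMap L1 L2 N i n) * Real.exp (-β * ham J (cellField L1 L2 h) σ)) := by
  have hβJ : 0 ≤ β * J := mul_nonneg hβ hJ.le
  fin_cases i
  · exact reflForm_reflMap_zero_sq_le (h := h) hNeven hβJ (fun σ σ' hσ => hf σ σ' hσ)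
      fun σ σ' hσ => hg σ σ' hσ
  · exact reflForm_reflMap_one_sq_le (h := h) hNeven hβJ (fun σ σ' hσ => hf σ σ' hσ)
      fun σ σ' hσ => hg σ σ' hσ

/-- Cauchy–Schwarz inequality from reflection positivity: for all
functions `f, g` on configuration space depending only on the restriction to the
left half `𝕋ˡ`,
`[Σ_σ f(σ)·g(σ∘ϑ)·e^{−βH_N(σ)}]² ≤
  [Σ_σ f(σ)·f(σ∘ϑ)·e^{−βH_N(σ)}]·[Σ_σ g(σ)·g(σ∘ϑ)·e^{−βH_N(σ)}]`. -/
theorem cauchy_schwarz_reflection (L1 L2 N : ℕ) (hL1 : 0 < L1) (hL2 : 0 < L2)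
    (hN : 2 ≤ N) (hNeven : Even N) [NeZero (N * L1)] [NeZero (N * L2)]
    (J h β : ℝ) (hJ : 0 < J) (hh : 0 < h) (hβ : 0 ≤ β) (i : Fin 2) (n : ℤ)
    (f g : (ZMod (N * L1) × ZMod (N * L2) → Bool) → ℝ)
    (hf : ∀ σ σ', (∀ t ∈ leftHalf L1 L2 N i n, σ t = σ' t) → f σ = f σ')
    (hg : ∀ σ σ', (∀ t ∈ leftHalf L1 L2 N i n, σ t = σ' t) → g σ = g σ') :
    (∑ σ : ZMod (N * L1) × ZMod (N * L2) → Bool,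
        f σ * g (σ ∘ reflMap L1 L2 N i n) * Real.exp (-β * ham J (cellField L1 L2 h) σ)) ^ 2
      ≤ (∑ σ : ZMod (N * L1) × ZMod (N * L2) → Bool,
          f σ * f (σ ∘ reflMap L1 L2 N i n) * Real.exp (-β * ham J (cellField L1 L2 h) σ))
        * (∑ σ : ZMod (N * L1) × ZMod (N * L2) → Bool,
          g σ * g (σ ∘ reflMap L1 L2 N i n) * Real.exp (-β * ham J (cellField L1 L2 h) σ)) :=
  cauchy_schwarz_reflection_general L1 L2 N hNeven J h β hJ hβ i n f g hf hg
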